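/- Let H be a complex Hilbert space and S the swap operator on H⊗H. Suppose λ1 ≥ 0, λ2 ≥ 0, λ4 = conj(λ3), and λ1·λ2 ≥ |λ3|². Then the map Ψ(X) = λ1(I⊗X) + λ2(X⊗I) + λ3 S(I⊗X) + λ4 S(X⊗I) is completely positive. -/

import Mathlib

open Matrix Kronecker ComplexOrder

/-- The swap operator on `H ⊗ H`, as a matrix: `S (x ⊗ y) = y ⊗ x`. -/
def swap (n : Type*) [DecidableEq n] : Matrix (n × n) (n × n) ℂ :=
  Matrix.of fun p q => if p.1 = q.2 ∧ p.2 = q.1 then (1 : ℂ) else 0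

/-- The `k`-th amplification of a map between matrix algebras. -/
def amplify {n N : Type*} (Psi : Matrix n n ℂ → Matrix N N ℂ) (k : ℕ)
    (M : Matrix (Fin k × n) (Fin k × n) ℂ) : Matrix (Fin k × N) (Fin k × N) ℂ :=
  Matrix.of fun p q => Psi (Matrix.of fun a b => M (p.1, a) (q.1, b)) p.2 q.2

lemma scalar_key (l1 l2 l3 : ℂ) (h1 : 0 ≤ l1) (h2 : 0 ≤ l2)
    (h : ((‖l3‖ ^ 2 : ℝ) : ℂ) ≤ l1 * l2) (u v : ℂ) :
    0 ≤ l1 * (star u * u) + l2 * (star v * v) + l3 * (star v * u) + star l3 * (star u * v) := by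
  rw [Complex.le_def] at h1 h2 h ⊢
  obtain ⟨h1r, h1i⟩ := h1
  obtain ⟨h2r, h2i⟩ := h2
  obtain ⟨hr, -⟩ := h
  have e1 : l1.im = 0 := h1i.symm
  have e2 : l2.im = 0 := h2i.symm
  simp only [Complex.zero_re, Complex.zero_im, Complex.ofReal_re] at *
  simp only [← Complex.normSq_eq_norm_sq, Complex.normSq_apply,
    Complex.mul_re, e1, e2, mul_zero, zero_mul, sub_zero] at hr
  constructor
  · simp only [Complex.add_re, Complex.mul_re, Complex.mul_im, Complex.star_def,
      Complex.conj_re, Complex.conj_im, e1, e2, zero_mul, sub_zero]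
    rcases eq_or_lt_of_le h1r with h0 | hpos
    · have h3 : l3.re = 0 ∧ l3.im = 0 := by
        constructor <;> nlinarith [sq_nonneg l3.re, sq_nonneg l3.im]
      rw [h3.1, h3.2]
      nlinarith [sq_nonneg v.re, sq_nonneg v.im, sq_nonneg u.re, sq_nonneg u.im]
    · nlinarith [sq_nonneg (l1.re * u.re + l3.re * v.re + l3.im * v.im),
        sq_nonneg (l1.re * u.im + l3.re * v.im - l3.im * v.re),
        mul_nonneg (sub_nonneg.mpr hr) (add_nonneg (mul_self_nonneg v.re) (mul_self_nonneg v.im)),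
        hpos]
  · simp only [Complex.add_im, Complex.mul_re, Complex.mul_im, Complex.star_def,
      Complex.conj_re, Complex.conj_im, e1, e2, zero_mul, mul_zero]
    ring

lemma vec_key {m : Type*} [Fintype m] (l1 l2 l3 : ℂ) (h1 : 0 ≤ l1) (h2 : 0 ≤ l2)
    (h : ((‖l3‖ ^ 2 : ℝ) : ℂ) ≤ l1 * l2) {M : Matrix m m ℂ} (hM : M.PosSemidef)
    (y z : m → ℂ) :
    0 ≤ l1 * (star y ⬝ᵥ M *ᵥ y) + l2 * (star z ⬝ᵥ M *ᵥ z)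
      + l3 * (star z ⬝ᵥ M *ᵥ y) + star l3 * (star y ⬝ᵥ M *ᵥ z) := by
  classical
  open scoped MatrixOrder in obtain ⟨B, hB⟩ := CStarAlgebra.nonneg_iff_eq_star_mul_self.mp hM.nonneg
  rw [Matrix.star_eq_conjTranspose] at hB
  subst hB
  have key : ∀ a b : m → ℂ, star a ⬝ᵥ (Bᴴ * B) *ᵥ b = star (B *ᵥ a) ⬝ᵥ (B *ᵥ b) := by
    intro a b
    rw [← Matrix.mulVec_mulVec, Matrix.dotProduct_mulVec (star a), Matrix.star_mulVec]
  rw [key, key, key, key]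
  set u := B *ᵥ y
  set v := B *ᵥ z
  have : l1 * (star u ⬝ᵥ u) + l2 * (star v ⬝ᵥ v) + l3 * (star v ⬝ᵥ u) + star l3 * (star u ⬝ᵥ v)
      = ∑ c, (l1 * (star (u c) * u c) + l2 * (star (v c) * v c)
        + l3 * (star (v c) * u c) + star l3 * (star (u c) * v c)) := by
    simp only [dotProduct, Finset.mul_sum, Pi.star_apply, Finset.sum_add_distrib]
  rw [this]
  exact Finset.sum_nonneg fun c _ => scalar_key l1 l2 l3 h1 h2 h (u c) (v c)

lemma swap_mul_apply {n : Type*} [Fintype n] [DecidableEq n]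
    (X : Matrix (n × n) (n × n) ℂ) (p q : n × n) :
    (swap n * X) p q = X (p.2, p.1) q := by
  rw [Matrix.mul_apply, Fintype.sum_prod_type]
  simp [_root_.swap, ite_and, Matrix.of_apply]

lemma sum_swap23 {α β γ : Type*} [Fintype α] [Fintype β] [Fintype γ]
    (f : α → β → γ → ℂ) :
    ∑ a : α, ∑ b : β, ∑ c : γ, f a b c = ∑ c : γ, ∑ a : α, ∑ b : β, f a b c := by
  have h : ∀ a : α, ∑ b : β, ∑ c : γ, f a b c = ∑ c : γ, ∑ b : β, f a b c :=
    fun a => Finset.sum_comm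
  simp_rw [h]
  exact Finset.sum_comm

lemma quad_form_eq {n : Type*} [Fintype n] [DecidableEq n] (k : ℕ)
    (A : Matrix (Fin k × n × n) (Fin k × n × n) ℂ)
    (M : Matrix (Fin k × n) (Fin k × n) ℂ) (l1 l2 l3 l4 : ℂ)
    (hA : ∀ (a b : Fin k) (i j i' j' : n), A (a, (i, j)) (b, (i', j')) =
      l1 * (if i = i' then M (a, j) (b, j') else 0)
      + l2 * (if j = j' then M (a, i) (b, i') else 0)
      + l3 * (if j = i' then M (a, i) (b, j') else 0)
      + l4 * (if i = j' then M (a, j) (b, i') else 0))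
    (x : Fin k × n × n → ℂ) :
    star x ⬝ᵥ A *ᵥ x =
      ∑ t : n,
        (l1 * (star (fun p : Fin k × n => x (p.1, (t, p.2))) ⬝ᵥ M *ᵥ (fun p => x (p.1, (t, p.2))))
        + l2 * (star (fun p : Fin k × n => x (p.1, (p.2, t))) ⬝ᵥ M *ᵥ (fun p => x (p.1, (p.2, t))))
        + l3 * (star (fun p : Fin k × n => x (p.1, (p.2, t))) ⬝ᵥ M *ᵥ (fun p => x (p.1, (t, p.2))))
        + l4 * (star (fun p : Fin k × n => x (p.1, (t, p.2))) ⬝ᵥ M *ᵥ (fun p => x (p.1, (p.2, t))))) := by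
  simp only [dotProduct, mulVec, Pi.star_apply, Fintype.sum_prod_type, hA,
    mul_ite, ite_mul, mul_zero, zero_mul, mul_add, add_mul, Finset.mul_sum, Finset.sum_mul,
    Finset.sum_add_distrib, Finset.sum_ite_irrel, Finset.sum_const_zero,
    Finset.sum_ite_eq, Finset.sum_ite_eq', Finset.mem_univ, if_true]
  congr 1
  congr 1
  congr 1
  · rw [Finset.sum_comm]
    exact Finset.sum_congr rfl fun t _ => Finset.sum_congr rfl fun a _ =>
      Finset.sum_congr rfl fun j _ => Finset.sum_congr rfl fun b _ =>
      Finset.sum_congr rfl fun j' _ => by ring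
  · rw [sum_swap23]
    exact Finset.sum_congr rfl fun t _ => Finset.sum_congr rfl fun a _ =>
      Finset.sum_congr rfl fun j _ => Finset.sum_congr rfl fun b _ =>
      Finset.sum_congr rfl fun j' _ => by ring
  · rw [sum_swap23]
    exact Finset.sum_congr rfl fun t _ => Finset.sum_congr rfl fun a _ =>
      Finset.sum_congr rfl fun j _ => Finset.sum_congr rfl fun b _ =>
      Finset.sum_congr rfl fun j' _ => by ring
  · rw [Finset.sum_comm]
    exact Finset.sum_congr rfl fun t _ => Finset.sum_congr rfl fun a _ =>
      Finset.sum_congr rfl fun j _ => Finset.sum_congr rfl fun b _ =>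
      Finset.sum_congr rfl fun j' _ => by ring

/-- If `λ₁, λ₂ ≥ 0`, `λ₄ = conj λ₃` and `λ₁λ₂ ≥ |λ₃|²`, then
`Ψ(X) = λ₁ I⊗X + λ₂ X⊗I + λ₃ S(I⊗X) + λ₄ S(X⊗I)` is completely positive. -/
theorem coefficient_conditions_imply_completely_positive {n : Type*} [Fintype n] [DecidableEq n]
    (l1 l2 l3 l4 : ℂ) (h1 : 0 ≤ l1) (h2 : 0 ≤ l2) (h34 : l4 = star l3)
    (h : ((‖l3‖ ^ 2 : ℝ) : ℂ) ≤ l1 * l2)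
    (Psi : Matrix n n ℂ → Matrix (n × n) (n × n) ℂ)
    (hPsi : ∀ X, Psi X = l1 • ((1 : Matrix n n ℂ) ⊗ₖ X) + l2 • (X ⊗ₖ (1 : Matrix n n ℂ))
        + l3 • (swap n * ((1 : Matrix n n ℂ) ⊗ₖ X))
        + l4 • (swap n * (X ⊗ₖ (1 : Matrix n n ℂ)))) :
    ∀ k : ℕ, ∀ M : Matrix (Fin k × n) (Fin k × n) ℂ, M.PosSemidef →
      (amplify Psi k M).PosSemidef := by
  intro k M hM
  -- entrywise formula for the amplification
  have hA : ∀ (a b : Fin k) (i j i' j' : n), amplify Psi k M (a, (i, j)) (b, (i', j')) =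
      l1 * (if i = i' then M (a, j) (b, j') else 0)
      + l2 * (if j = j' then M (a, i) (b, i') else 0)
      + l3 * (if j = i' then M (a, i) (b, j') else 0)
      + l4 * (if i = j' then M (a, j) (b, i') else 0) := by
    intro a b i j i' j'
    simp only [amplify, Matrix.of_apply, hPsi, Matrix.add_apply, Matrix.smul_apply,
      swap_mul_apply, Matrix.kroneckerMap_apply, Matrix.one_apply, smul_eq_mul]
    ring_nf
    simp [mul_comm, ite_mul, mul_ite]
  have sl1 : star l1 = l1 := by
    rw [Complex.le_def] at h1
    exact Complex.conj_eq_iff_im.mpr h1.2.symm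
  have sl2 : star l2 = l2 := by
    rw [Complex.le_def] at h2
    exact Complex.conj_eq_iff_im.mpr h2.2.symm
  refine Matrix.PosSemidef.of_dotProduct_mulVec_nonneg ?_ ?_
  · -- Hermitian
    ext ⟨a, i, j⟩ ⟨b, i', j'⟩
    rw [Matrix.conjTranspose_apply, hA, hA]
    have hMh : ∀ (p q : Fin k × n), star (M p q) = M q p := fun p q => congrFun (congrFun hM.1 q) p
    have sl3 : star l3 = l4 := h34.symm
    have sl4 : star l4 = l3 := by rw [h34, star_star]
    simp only [star_add, star_mul', star_zero, apply_ite (star : ℂ → ℂ), sl1, sl2, sl3, sl4, hMh]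
    rw [show ((if i' = i then M (a, j) (b, j') else 0) = if i = i' then M (a, j) (b, j') else 0) by
      simp [eq_comm]]
    rw [show ((if j' = j then M (a, i) (b, i') else 0) = if j = j' then M (a, i) (b, i') else 0) by
      simp [eq_comm]]
    rw [show ((if j' = i then M (a, j) (b, i') else 0) = if i = j' then M (a, j) (b, i') else 0) by
      simp [eq_comm]]
    rw [show ((if i' = j then M (a, i) (b, j') else 0) = if j = i' then M (a, i) (b, j') else 0) by
      simp [eq_comm]]
    ring
  · -- positivity of the quadratic form
    intro x
    rw [quad_form_eq k (amplify Psi k M) M l1 l2 l3 l4 hA x]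
    apply Finset.sum_nonneg
    intro t _
    rw [h34]
    exact vec_key l1 l2 l3 h1 h2 h hM (fun p => x (p.1, (t, p.2))) (fun p => x (p.1, (p.2, t)))
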